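/- Let θ_1,…,θ_M ≥ 0, θ_c = Σᵢθᵢ, 0 ≤ ρΔtθ_c ≤ 1, and square-integrable random variables u_c, u_1,…,u_M, together with a random variable ΔW independent of all of them with E[ΔW] = 0 and E[ΔW²] = Δt. If u^{new} = (1−ρΔtθ_c)u_c + ρΔt Σᵢ θᵢuᵢ + μ u_c ΔW, then E[(u^{new})²] ≤ (1 + μ²Δt)·max(E[u_c²], max_i E[uᵢ²]). -/

import Mathlib

/-!
Write `u_new = D + μ u_c ΔW` with `D = (1 - c Σ θᵢ) u_c + c Σ θᵢ uᵢ` and `c = ρΔt`; under the CFL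
condition `D` is a convex combination of `u_c, u_1, …, u_M`. Since `(D, u_c)` is independent of
`ΔW` and `E[ΔW] = 0`, the cross term `2μ E[D u_c ΔW]` vanishes and the noise term is
`μ² E[u_c²] E[ΔW²] = μ² Δt E[u_c²]`. Convexity of `x ↦ x²` bounds `E[D²]` by the same convex
combination of the second moments, hence by their maximum.
-/

open MeasureTheory ProbabilityTheory

lemma sq_convexCombination_le {ι : Type*} (s : Finset ι) {c : ℝ} (hc : 0 ≤ c) {θ : ι → ℝ}
    (hθ : ∀ i ∈ s, 0 ≤ θ i) (hcθ : c * ∑ i ∈ s, θ i ≤ 1) (x : ℝ) (y : ι → ℝ) :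
    ((1 - c * ∑ i ∈ s, θ i) * x + c * ∑ i ∈ s, θ i * y i) ^ 2 ≤
      (1 - c * ∑ i ∈ s, θ i) * x ^ 2 + c * ∑ i ∈ s, θ i * y i ^ 2 := by
  have jensen := Real.pow_arith_mean_le_arith_mean_pow_of_even (Finset.insertNone s)
    (fun o => o.elim (1 - c * ∑ i ∈ s, θ i) (fun i => c * θ i)) (fun o => o.elim x y)
    (fun o ho => ?_) ?_ even_two
  · simpa only [Finset.sum_insertNone, Option.elim, mul_assoc, ← Finset.mul_sum] using jensen
  · cases o with
    | none => exact sub_nonneg.2 hcθ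
    | some i => exact mul_nonneg hc (hθ i (Finset.some_mem_insertNone.1 ho))
  · simp only [Finset.sum_insertNone, Option.elim, ← Finset.mul_sum, sub_add_cancel]

lemma integral_sq_convexCombination_le {Ω ι : Type*} [MeasurableSpace Ω] {P : Measure Ω}
    (s : Finset ι) {c : ℝ} (hc : 0 ≤ c) {θ : ι → ℝ} (hθ : ∀ i ∈ s, 0 ≤ θ i)
    (hcθ : c * ∑ i ∈ s, θ i ≤ 1) {X : Ω → ℝ} {Y : ι → Ω → ℝ} (hX : MemLp X 2 P)
    (hY : ∀ i ∈ s, MemLp (Y i) 2 P) {K : ℝ} (hXK : ∫ ω, X ω ^ 2 ∂P ≤ K)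
    (hYK : ∀ i ∈ s, ∫ ω, Y i ω ^ 2 ∂P ≤ K) :
    ∫ ω, ((1 - c * ∑ i ∈ s, θ i) * X ω + c * ∑ i ∈ s, θ i * Y i ω) ^ 2 ∂P ≤ K := by
  have hYsq : ∀ i ∈ s, Integrable (fun ω => θ i * Y i ω ^ 2) P :=
    fun i hi => (hY i hi).integrable_sq.const_mul _
  have hD : MemLp (fun ω => (1 - c * ∑ i ∈ s, θ i) * X ω + c * ∑ i ∈ s, θ i * Y i ω) 2 P :=
    (hX.const_mul _).add
      ((memLp_finsetSum s fun i hi => (hY i hi).const_mul (θ i)).const_mul c)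
  calc ∫ ω, ((1 - c * ∑ i ∈ s, θ i) * X ω + c * ∑ i ∈ s, θ i * Y i ω) ^ 2 ∂P
      ≤ ∫ ω, ((1 - c * ∑ i ∈ s, θ i) * X ω ^ 2 + c * ∑ i ∈ s, θ i * Y i ω ^ 2) ∂P :=
        integral_mono hD.integrable_sq
          ((hX.integrable_sq.const_mul _).add ((integrable_finsetSum s hYsq).const_mul _))
          fun ω => sq_convexCombination_le s hc hθ hcθ (X ω) (Y · ω)
    _ = (1 - c * ∑ i ∈ s, θ i) * ∫ ω, X ω ^ 2 ∂P + c * ∑ i ∈ s, θ i * ∫ ω, Y i ω ^ 2 ∂P := by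
        rw [integral_add (hX.integrable_sq.const_mul _) ((integrable_finsetSum s hYsq).const_mul _),
          integral_const_mul, integral_const_mul, integral_finsetSum s hYsq]
        simp only [integral_const_mul]
    _ ≤ (1 - c * ∑ i ∈ s, θ i) * K + c * ∑ i ∈ s, θ i * K := by
        gcongr with i hi
        exacts [hθ i hi, hYK i hi]
    _ = K := by rw [← Finset.sum_mul]; ring

lemma integral_sq_add_mul_of_indepFun {Ω : Type*} [MeasurableSpace Ω] {P : Measure Ω}
    [IsFiniteMeasure P] {D X W : Ω → ℝ} (hD : MemLp D 2 P) (hX : MemLp X 2 P) (hW : MemLp W 2 P)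
    (hind : IndepFun (fun ω => (D ω, X ω)) W P) (hmean : ∫ ω, W ω ∂P = 0) (a : ℝ) :
    ∫ ω, (D ω + a * X ω * W ω) ^ 2 ∂P =
      ∫ ω, D ω ^ 2 ∂P + a ^ 2 * (∫ ω, X ω ^ 2 ∂P) * ∫ ω, W ω ^ 2 ∂P := by
  have hindDX : IndepFun (fun ω => D ω * X ω) W P :=
    hind.comp (measurable_fst.mul measurable_snd) measurable_id
  have hindXW : IndepFun (fun ω => X ω ^ 2) (fun ω => W ω ^ 2) P :=
    hind.comp (measurable_snd.pow_const 2) (measurable_id.pow_const 2)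
  have hDX : Integrable (fun ω => D ω * X ω) P := hD.integrable_mul hX
  have hW1 : Integrable W P := hW.integrable one_le_two
  have hcross : Integrable (fun ω => D ω * X ω * W ω) P := hindDX.integrable_mul hDX hW1
  have hnoise : Integrable (fun ω => X ω ^ 2 * W ω ^ 2) P :=
    hindXW.integrable_mul hX.integrable_sq hW.integrable_sq
  have hcross_zero : ∫ ω, D ω * X ω * W ω ∂P = 0 := by
    rw [← Pi.mul_def, hindDX.integral_mul_eq_mul_integral hDX.aestronglyMeasurable
      hW1.aestronglyMeasurable, hmean, mul_zero]
  have hnoise_eq : ∫ ω, X ω ^ 2 * W ω ^ 2 ∂P = (∫ ω, X ω ^ 2 ∂P) * ∫ ω, W ω ^ 2 ∂P :=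
    hindXW.integral_mul_eq_mul_integral hX.integrable_sq.aestronglyMeasurable
      hW.integrable_sq.aestronglyMeasurable
  calc ∫ ω, (D ω + a * X ω * W ω) ^ 2 ∂P
      = ∫ ω, (D ω ^ 2 + 2 * a * (D ω * X ω * W ω) + a ^ 2 * (X ω ^ 2 * W ω ^ 2)) ∂P := by
        congr 1; ext ω; ring
    _ = ∫ ω, D ω ^ 2 ∂P + 2 * a * ∫ ω, D ω * X ω * W ω ∂P
          + a ^ 2 * ∫ ω, X ω ^ 2 * W ω ^ 2 ∂P := by
        have hDsq : Integrable (fun ω => D ω ^ 2) P := hD.integrable_sq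
        rw [integral_add (f := fun ω => D ω ^ 2 + 2 * a * (D ω * X ω * W ω))
            (hDsq.add (hcross.const_mul _)) (hnoise.const_mul _),
          integral_add hDsq (hcross.const_mul _), integral_const_mul, integral_const_mul]
    _ = _ := by rw [hcross_zero, hnoise_eq]; ring

theorem stmt_16 {Ω : Type*} [MeasureSpace Ω] [IsProbabilityMeasure (ℙ : Measure Ω)]
    (M : ℕ) (hM : 0 < M) (θ : Fin M → ℝ) (hθ : ∀ i, 0 ≤ θ i)
    (ρ Δt μ : ℝ) (hρ : 0 ≤ ρ) (hΔt : 0 ≤ Δt) (hcfl : ρ * Δt * (∑ i, θ i) ≤ 1)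
    (uc : Ω → ℝ) (u : Fin M → Ω → ℝ) (ΔW : Ω → ℝ)
    (huc : MemLp uc 2 ℙ) (hu : ∀ i, MemLp (u i) 2 ℙ) (hW : MemLp ΔW 2 ℙ)
    (hind : IndepFun (fun ω => (uc ω, fun i => u i ω)) ΔW ℙ)
    (hmean : ∫ ω, ΔW ω = 0) (hvar : ∫ ω, (ΔW ω) ^ 2 = Δt)
    (unew : Ω → ℝ)
    (hunew : ∀ ω, unew ω =
      (1 - ρ * Δt * (∑ i, θ i)) * uc ω + ρ * Δt * (∑ i, θ i * u i ω) + μ * uc ω * ΔW ω) :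
    ∫ ω, (unew ω) ^ 2 ≤
      (1 + μ ^ 2 * Δt) *
        max (∫ ω, (uc ω) ^ 2)
          (Finset.univ.sup' (Finset.univ_nonempty_iff.mpr (Fin.pos_iff_nonempty.mp hM))
            fun i => ∫ ω, (u i ω) ^ 2) := by
  set K := max (∫ ω, (uc ω) ^ 2)
    (Finset.univ.sup' (Finset.univ_nonempty_iff.mpr (Fin.pos_iff_nonempty.mp hM))
      fun i => ∫ ω, (u i ω) ^ 2)
  set D : Ω → ℝ := fun ω => (1 - ρ * Δt * (∑ i, θ i)) * uc ω + ρ * Δt * (∑ i, θ i * u i ω)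
  have hc : 0 ≤ ρ * Δt := mul_nonneg hρ hΔt
  have hucK : ∫ ω, uc ω ^ 2 ≤ K := le_max_left _ _
  have hD : MemLp D 2 ℙ :=
    (huc.const_mul _).add ((memLp_finsetSum _ fun i _ => (hu i).const_mul (θ i)).const_mul _)
  have hDK : ∫ ω, D ω ^ 2 ≤ K :=
    integral_sq_convexCombination_le _ hc (fun i _ => hθ i) hcfl huc (fun i _ => hu i) hucK
      fun i _ => (Finset.le_sup' (fun i => ∫ ω, u i ω ^ 2) (Finset.mem_univ i)).trans
        (le_max_right _ _)
  have hindD : IndepFun (fun ω => (D ω, uc ω)) ΔW ℙ :=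
    hind.comp (φ := fun p : ℝ × (Fin M → ℝ) =>
      ((1 - ρ * Δt * ∑ i, θ i) * p.1 + ρ * Δt * ∑ i, θ i * p.2 i, p.1)) (by fun_prop) measurable_id
  calc ∫ ω, unew ω ^ 2 = ∫ ω, (D ω + μ * uc ω * ΔW ω) ^ 2 := by simp only [hunew, D]
    _ = (∫ ω, D ω ^ 2) + μ ^ 2 * (∫ ω, uc ω ^ 2) * Δt := by
        rw [integral_sq_add_mul_of_indepFun hD huc hW hindD hmean μ, hvar]
    _ ≤ K + μ ^ 2 * K * Δt := by gcongr
    _ = (1 + μ ^ 2 * Δt) * K := by ring
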